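/- arXiv:2002.07878 — 6 statements merged into one kernel-verified Lean document; each statement's English description precedes it below -/
import Mathlib

section
/- Let {h_k}_{k≥−1}, {s_k}_{k≥1}, {α_k}_{k≥0}, {δ_k}_{k≥0} be sequences in [0,∞) with h₀ = h₋₁, 0 ≤ α_k ≤ α < 1 for all k, and h_{k+1} − h_k + s_{k+1} ≤ α_k(h_k − h_{k−1}) + δ_k for all k ≥ 0. Then for all k ≥ 1, h_k + ∑_{j=1}^k s_j ≤ h₀ + (1/(1−α)) ∑_{j=0}^{k−1} δ_j. -/
/-- `h (k+1)` stands for `h_k` (so `h 0 = h_{-1}`); `s j` is `s_j` for `j ≥ 1`;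
`α k`, `δ k` are `α_k`, `δ_k` for `k ≥ 0`. -/
theorem stmt5 (h s α δ : ℕ → ℝ) (a : ℝ)
    (hh : ∀ k, 0 ≤ h k) (hs : ∀ k, 0 ≤ s k) (hδ : ∀ k, 0 ≤ δ k)
    (hinit : h 0 = h 1)
    (hα : ∀ k, 0 ≤ α k ∧ α k ≤ a) (ha : a < 1)
    (hrec : ∀ k : ℕ, h (k + 2) - h (k + 1) + s (k + 1)
      ≤ α k * (h (k + 1) - h k) + δ k) :
    ∀ k : ℕ, 1 ≤ k →
      h (k + 1) + ∑ j ∈ Finset.Icc 1 k, s j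
        ≤ h 1 + (1 / (1 - a)) * ∑ j ∈ Finset.range k, δ j := by
  have ha0 : 0 ≤ a := le_trans (hα 0).1 (hα 0).2
  have h1a : 0 < 1 - a := by linarith
  set p : ℕ → ℝ := fun k => max (h (k + 1) - h k) 0 with hp
  have hpnn : ∀ k, 0 ≤ p k := fun k => le_max_right _ _
  have hp0 : p 0 = 0 := by simp [hp, hinit]
  -- key bound on α k * (h (k+1) - h k)
  have hab : ∀ k, α k * (h (k + 1) - h k) ≤ a * p k := by
    intro k
    calc α k * (h (k + 1) - h k) ≤ α k * p k :=
          mul_le_mul_of_nonneg_left (le_max_left _ _) (hα k).1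
      _ ≤ a * p k := mul_le_mul_of_nonneg_right (hα k).2 (hpnn k)
  have hrec' : ∀ k, p (k + 1) ≤ a * p k + δ k := by
    intro k
    apply max_le
    · have := hrec k
      have := hab k
      have := hs (k + 1)
      linarith
    · have := mul_nonneg ha0 (hpnn k)
      have := hδ k
      linarith
  -- bound on sum of p
  have hsump : ∀ K : ℕ, (1 - a) * ∑ k ∈ Finset.range K, p k
      ≤ ∑ k ∈ Finset.range K, δ k := by
    intro K
    have h2 : ∑ k ∈ Finset.range K, p (k + 1)
        = ∑ k ∈ Finset.range K, p k + p K - p 0 := by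
      induction K with
      | zero => simp
      | succ n ih => rw [Finset.sum_range_succ, Finset.sum_range_succ, ih]; ring
    have h1 : ∑ k ∈ Finset.range K, p (k + 1)
        ≤ ∑ k ∈ Finset.range K, (a * p k + δ k) :=
      Finset.sum_le_sum fun k _ => hrec' k
    rw [h2, hp0] at h1
    rw [Finset.sum_add_distrib, ← Finset.mul_sum] at h1
    have := hpnn K
    nlinarith
  intro K hK
  have htel : ∑ k ∈ Finset.range K, (h (k + 2) - h (k + 1)) = h (K + 1) - h 1 := by
    have := Finset.sum_range_sub (fun i => h (i + 1)) K
    simpa using this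
  have hIcc : ∀ n, ∑ j ∈ Finset.Icc 1 n, s j = ∑ k ∈ Finset.range n, s (k + 1) := by
    intro n
    induction n with
    | zero => simp
    | succ n ih =>
      rw [Finset.sum_Icc_succ_top (by omega), Finset.sum_range_succ, ih]
  have hsum : ∑ k ∈ Finset.range K, (h (k + 2) - h (k + 1) + s (k + 1))
      ≤ ∑ k ∈ Finset.range K, (a * p k + δ k) :=
    Finset.sum_le_sum fun k _ => by
      have := hrec k; have := hab k; linarith
  rw [Finset.sum_add_distrib, htel, Finset.sum_add_distrib, ← Finset.mul_sum,
    ← hIcc K] at hsum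
  have hP := hsump K
  have hPnn : 0 ≤ ∑ k ∈ Finset.range K, p k :=
    Finset.sum_nonneg fun k _ => hpnn k
  have hδnn : 0 ≤ ∑ k ∈ Finset.range K, δ k :=
    Finset.sum_nonneg fun k _ => hδ k
  have key : a * ∑ k ∈ Finset.range K, p k
      ≤ (a / (1 - a)) * ∑ k ∈ Finset.range K, δ k := by
    rw [div_mul_eq_mul_div, le_div_iff₀ h1a]
    nlinarith
  have : h (K + 1) + ∑ j ∈ Finset.Icc 1 K, s j
      ≤ h 1 + (a / (1 - a)) * ∑ k ∈ Finset.range K, δ k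
        + ∑ k ∈ Finset.range K, δ k := by linarith
  have heq : h 1 + (a / (1 - a)) * ∑ k ∈ Finset.range K, δ k
        + ∑ k ∈ Finset.range K, δ k
      = h 1 + (1 / (1 - a)) * ∑ k ∈ Finset.range K, δ k := by
    field_simp
    ring
  linarith [heq ▸ this]
end

section
/- Let {h_k}_{k≥−1}, {s_k}_{k≥1}, {α_k}, {δ_k} be sequences in [0,∞) with h₀ = h₋₁, 0 ≤ α_k ≤ α < 1, h_{k+1} − h_k + s_{k+1} ≤ α_k(h_k − h_{k−1}) + δ_k for all k ≥ 0, and ∑_{k=0}^∞ δ_k < ∞. Then lim_{k→∞} h_k exists (the sequence {h_k} converges to some element of [0,∞)). -/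
open Filter

/-- `h (k+1)` stands for `h_k` (so `h 0 = h_{-1}`). -/
theorem stmt6 (h s α δ : ℕ → ℝ) (a : ℝ)
    (hh : ∀ k, 0 ≤ h k) (hs : ∀ k, 0 ≤ s k) (hδ : ∀ k, 0 ≤ δ k)
    (hinit : h 0 = h 1)
    (hα : ∀ k, 0 ≤ α k ∧ α k ≤ a) (ha : a < 1)
    (hrec : ∀ k : ℕ, h (k + 2) - h (k + 1) + s (k + 1)
      ≤ α k * (h (k + 1) - h k) + δ k)
    (hsum : Summable δ) :
    ∃ L : ℝ, 0 ≤ L ∧ Tendsto h atTop (nhds L) := by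
  have ha0 : 0 ≤ a := le_trans (hα 0).1 (hα 0).2
  set θ : ℕ → ℝ := fun k => max (h (k + 1) - h k) 0 with hθdef
  have hθnn : ∀ k, 0 ≤ θ k := fun k => le_max_right _ _
  have hθub : ∀ k, h (k + 1) - h k ≤ θ k := fun k => le_max_left _ _
  have hθ0 : θ 0 = 0 := by simp [hθdef, hinit]
  have hθrec : ∀ k, θ (k + 1) ≤ a * θ k + δ k := by
    intro k
    have hαb : α k * (h (k + 1) - h k) ≤ a * θ k := by
      rcases le_or_gt 0 (h (k + 1) - h k) with hd | hd
      · calc α k * (h (k + 1) - h k) ≤ a * (h (k + 1) - h k) :=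
              mul_le_mul_of_nonneg_right (hα k).2 hd
          _ ≤ a * θ k := mul_le_mul_of_nonneg_left (le_max_left _ _) ha0
      · exact (mul_nonpos_of_nonneg_of_nonpos (hα k).1 hd.le).trans
          (mul_nonneg ha0 (hθnn k))
    have h1 : h (k + 2) - h (k + 1) ≤ a * θ k + δ k := by
      have := hrec k; nlinarith [hs (k + 1)]
    have h2 : (0 : ℝ) ≤ a * θ k + δ k :=
      add_nonneg (mul_nonneg ha0 (hθnn k)) (hδ k)
    exact max_le h1 h2
  set D : ℝ := ∑' k, δ k with hD
  have hδpart : ∀ n, ∑ k ∈ Finset.range n, δ k ≤ D := fun n =>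
    Summable.sum_le_tsum (Finset.range n) (fun k _ => hδ k) hsum
  have hD0 : 0 ≤ D := tsum_nonneg hδ
  have h1a : 0 < 1 - a := by linarith
  have hbound' : ∀ n, (∑ k ∈ Finset.range n, θ k) * (1 - a) ≤ D := by
    intro n
    induction n with
    | zero => simpa using hD0
    | succ n ih =>
      have key : ∑ k ∈ Finset.range (n + 1), θ k
          ≤ a * ∑ k ∈ Finset.range n, θ k + D := by
        rw [Finset.sum_range_succ']
        calc (∑ k ∈ Finset.range n, θ (k + 1)) + θ 0
            ≤ (∑ k ∈ Finset.range n, (a * θ k + δ k)) + 0 := by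
              rw [hθ0]
              exact add_le_add (Finset.sum_le_sum fun k _ => hθrec k) le_rfl
          _ = a * ∑ k ∈ Finset.range n, θ k + ∑ k ∈ Finset.range n, δ k := by
              rw [Finset.sum_add_distrib, Finset.mul_sum]; ring
          _ ≤ a * ∑ k ∈ Finset.range n, θ k + D :=
              add_le_add le_rfl (hδpart n)
      have := mul_le_mul_of_nonneg_left ih ha0
      nlinarith
  have hbound : ∀ n, ∑ k ∈ Finset.range n, θ k ≤ D / (1 - a) := fun n =>
    (le_div_iff₀ h1a).2 (hbound' n)
  have hθsum : Summable θ := summable_of_sum_range_le hθnn hbound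
  set T : ℝ := ∑' k, θ k with hT
  have hSpart : ∀ n, ∑ k ∈ Finset.range n, θ k ≤ T := fun n =>
    Summable.sum_le_tsum (Finset.range n) (fun k _ => hθnn k) hθsum
  set g : ℕ → ℝ := fun n => h n - ∑ k ∈ Finset.range n, θ k with hg
  have hganti : Antitone g := by
    apply antitone_nat_of_succ_le
    intro n
    have := hθub n
    simp only [hg, Finset.sum_range_succ]
    linarith
  have hgbdd : BddBelow (Set.range g) := by
    refine ⟨-T, ?_⟩
    rintro x ⟨n, rfl⟩
    have := hh n
    have := hSpart n
    simp only [hg]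
    linarith
  have hgtend : Tendsto g atTop (nhds (⨅ n, g n)) :=
    tendsto_atTop_ciInf hganti hgbdd
  have hStend : Tendsto (fun n => ∑ k ∈ Finset.range n, θ k) atTop (nhds T) :=
    hθsum.hasSum.tendsto_sum_nat
  have htend : Tendsto h atTop (nhds ((⨅ n, g n) + T)) := by
    have := hgtend.add hStend
    convert this using 2 with n
    simp [hg]
  exact ⟨_, ge_of_tendsto' htend hh, htend⟩
end

section
/- Let ᾱ ∈ (0,1) and set β̄ = 2(ᾱ−1)²/(2(ᾱ−1)² + 3ᾱ − 1) ∈ (0,2). Define q(ν) = 2(β̄⁻¹ − 1)ν² − (4β̄⁻¹ − 1)ν + 2β̄⁻¹ − 1. Then q(ᾱ) = 0 and q(ν) > 0 for all ν ∈ [0, ᾱ). -/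
theorem stmt10 (ᾱ : ℝ) (hᾱ : ᾱ ∈ Set.Ioo (0 : ℝ) 1)
    (β : ℝ) (hβdef : β = 2 * (ᾱ - 1) ^ 2 / (2 * (ᾱ - 1) ^ 2 + 3 * ᾱ - 1))
    (hβ : β ∈ Set.Ioo (0 : ℝ) 2)
    (q : ℝ → ℝ)
    (hq : ∀ ν, q ν = 2 * (β⁻¹ - 1) * ν ^ 2 - (4 * β⁻¹ - 1) * ν + 2 * β⁻¹ - 1) :
    q ᾱ = 0 ∧ ∀ ν ∈ Set.Ico 0 ᾱ, 0 < q ν := by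
  obtain ⟨h0, h1⟩ := hᾱ
  have hne : ᾱ - 1 ≠ 0 := by linarith
  have h2 : (0:ℝ) < (ᾱ - 1) ^ 2 := lt_of_le_of_ne (sq_nonneg _) (Ne.symm (pow_ne_zero 2 hne))
  have hD : (0:ℝ) < 2 * (ᾱ - 1) ^ 2 + 3 * ᾱ - 1 := by nlinarith
  have hB : β⁻¹ = (2 * (ᾱ - 1) ^ 2 + 3 * ᾱ - 1) / (2 * (ᾱ - 1) ^ 2) := by
    rw [hβdef, inv_div]
  have key : ∀ ν : ℝ, q ν =
      ((ᾱ - ν) * (2 * (ᾱ + 1) - 2 * (3 * ᾱ - 1) * ν)) / (2 * (ᾱ - 1) ^ 2) := by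
    intro ν
    rw [hq, hB]
    field_simp
    ring
  constructor
  · rw [key]; simp
  · intro ν ⟨hν0, hνᾱ⟩
    rw [key]
    apply div_pos
    · have hf : 0 < 2 * (ᾱ + 1) - 2 * (3 * ᾱ - 1) * ν := by
        rcases le_or_gt (3 * ᾱ - 1) 0 with h | h
        · nlinarith
        · nlinarith [mul_lt_mul_of_pos_left hνᾱ h]
      exact mul_pos (by linarith) hf
    · linarith
end

section
/- Let H and G be real Hilbert spaces, A: H ⇉ H and B: G ⇉ G maximal monotone operators, and G: H → G a bounded linear operator. Suppose a^k ∈ A(r^k) and b^k ∈ B(s^k) for all k, r^k ⇀ r^∞ weakly, b^k ⇀ b^∞ weakly, a^k + G*b^k → 0 strongly, and G r^k − s^k → 0 strongly. Then b^∞ ∈ B(G r^∞) and −G* b^∞ ∈ A(r^∞). -/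
/-!
The sequences `a`, `r`, `b`, `s` converge weakly to `-T* binf`, `rinf`, `binf`, `T rinf`.
Inner products of weakly convergent sequences need not converge, but here the cross term
`⟪a k, r k⟫ + ⟪b k, s k⟫ = ⟪a k + T* b k, r k⟫ - ⟪b k, T (r k) - s k⟫` tends to
`0 = ⟪-T* binf, rinf⟫ + ⟪binf, T rinf⟫`, so the monotonicity inequalities of `A` and `B` at
`(r k, a k)` and `(s k, b k)` pass to the limit in their sum. Maximality of each operator,
used once against the other, then puts both limit points in the graphs.
-/

open Filter RealInnerProductSpace

/-- A set-valued operator `A` on a real Hilbert space is maximal monotone. -/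
def IsMaximalMonotone {H : Type*} [NormedAddCommGroup H] [InnerProductSpace ℝ H]
    (A : H → Set H) : Prop :=
  (∀ x y u v, u ∈ A x → v ∈ A y → (0 : ℝ) ≤ ⟪u - v, x - y⟫) ∧
  (∀ x u, (∀ y v, v ∈ A y → (0 : ℝ) ≤ ⟪u - v, x - y⟫) → u ∈ A x)

open Topology

section WeakConvergence

variable {E F : Type*} [NormedAddCommGroup E] [InnerProductSpace ℝ E]
  [NormedAddCommGroup F] [InnerProductSpace ℝ F]

def WeakTendsto (x : ℕ → E) (l : E) : Prop :=
  ∀ y : E, Tendsto (fun k => ⟪x k, y⟫) atTop (𝓝 ⟪l, y⟫)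

namespace WeakTendsto

variable {x y : ℕ → E} {l : E}

theorem exists_norm_le [CompleteSpace E] (hx : WeakTendsto x l) : ∃ M, ∀ k, ‖x k‖ ≤ M := by
  obtain ⟨M, hM⟩ := banach_steinhaus (g := fun k => innerSL ℝ (x k)) fun y => by
    obtain ⟨c, hc⟩ := (hx y).norm.bddAbove_range
    exact ⟨c, fun k => hc ⟨k, rfl⟩⟩
  exact ⟨M, fun k => by simpa [innerSL_apply_norm] using hM k⟩

theorem map [CompleteSpace E] [CompleteSpace F] (hx : WeakTendsto x l) (T : E →L[ℝ] F) :
    WeakTendsto (fun k => T (x k)) (T l) := fun y => by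
  simpa only [← ContinuousLinearMap.adjoint_inner_right] using hx (T.adjoint y)

theorem neg (hx : WeakTendsto x l) : WeakTendsto (fun k => -x k) (-l) := fun y => by
  simpa only [inner_neg_left] using (hx y).neg

theorem congr_of_norm_sub (hx : WeakTendsto x l)
    (hxy : Tendsto (fun k => ‖x k - y k‖) atTop (𝓝 0)) : WeakTendsto y l := fun z => by
  have hdiff : Tendsto (fun k => ⟪x k - y k, z⟫) atTop (𝓝 0) :=
    squeeze_zero_norm (fun k => norm_inner_le_norm _ _) (by simpa using hxy.mul_const ‖z‖)
  simpa [inner_sub_left] using (hx z).sub hdiff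

end WeakTendsto

theorem tendsto_inner_zero_of_norm_le {x y : ℕ → E} {M : ℝ} (hx : ∀ k, ‖x k‖ ≤ M)
    (hy : Tendsto (fun k => ‖y k‖) atTop (𝓝 0)) :
    Tendsto (fun k => ⟪x k, y k⟫) atTop (𝓝 0) :=
  squeeze_zero_norm
    (fun k => (norm_inner_le_norm _ _).trans
      (mul_le_mul_of_nonneg_right (hx k) (norm_nonneg _)))
    (by simpa using hy.const_mul M)

/-- Only the cross term `⟪u k, x k⟫` of `⟪u k - v, x k - y⟫` can fail to pass to the weak limit. -/
theorem WeakTendsto.tendsto_inner_sub_sub_sub_inner {x u : ℕ → E} {x₀ u₀ : E}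
    (hx : WeakTendsto x x₀) (hu : WeakTendsto u u₀) (y v : E) :
    Tendsto (fun k => ⟪u k - v, x k - y⟫ - ⟪u k, x k⟫) atTop
      (𝓝 (⟪u₀ - v, x₀ - y⟫ - ⟪u₀, x₀⟫)) := by
  have hexpand : ∀ p q : E, ⟪q - v, p - y⟫ - ⟪q, p⟫ = -⟪q, y⟫ - ⟪p, v⟫ + ⟪v, y⟫ := by
    intro p q
    simp only [inner_sub_left, inner_sub_right, real_inner_comm v p]
    ring
  simp only [hexpand]
  exact ((hu y).neg.sub (hx v)).add_const _

end WeakConvergence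

theorem IsMaximalMonotone.mem_and_mem_of_inner_add_nonneg
    {E F : Type*} [NormedAddCommGroup E] [InnerProductSpace ℝ E]
    [NormedAddCommGroup F] [InnerProductSpace ℝ F]
    {A : E → Set E} {B : F → Set F} (hA : IsMaximalMonotone A) (hB : IsMaximalMonotone B)
    {p z : E} {q w : F}
    (h : ∀ x u y v, u ∈ A x → v ∈ B y → 0 ≤ ⟪z - u, p - x⟫ + ⟪w - v, q - y⟫) :
    z ∈ A p ∧ w ∈ B q := by
  have hwB : w ∈ B q := by
    refine hB.2 q w fun y v hv => ?_
    by_contra! hneg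
    -- a negative `B`-term makes every `A`-term positive, so `z ∈ A p`; test `h` at `(p, z)`
    have hzA : z ∈ A p :=
      hA.2 p z fun x u hu => by linarith [h x u y v hu hv]
    linarith [h p z y v hzA hv, show ⟪z - z, p - p⟫ = 0 by simp]
  refine ⟨hA.2 p z fun x u hu => ?_, hwB⟩
  simpa using h x u q w hu hwB

theorem stmt12 {H G : Type*}
    [NormedAddCommGroup H] [InnerProductSpace ℝ H] [CompleteSpace H]
    [NormedAddCommGroup G] [InnerProductSpace ℝ G] [CompleteSpace G]
    (A : H → Set H) (B : G → Set G)
    (hA : IsMaximalMonotone A) (hB : IsMaximalMonotone B)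
    (T : H →L[ℝ] G)
    (a r : ℕ → H) (b s : ℕ → G) (rinf : H) (binf : G)
    (ha : ∀ k, a k ∈ A (r k)) (hb : ∀ k, b k ∈ B (s k))
    (hr : ∀ y : H, Tendsto (fun k => ⟪r k, y⟫) atTop (nhds ⟪rinf, y⟫))
    (hbw : ∀ y : G, Tendsto (fun k => ⟪b k, y⟫) atTop (nhds ⟪binf, y⟫))
    (hsum : Tendsto (fun k => ‖a k + (ContinuousLinearMap.adjoint T) (b k)‖) atTop (nhds 0))
    (hGr : Tendsto (fun k => ‖T (r k) - s k‖) atTop (nhds 0)) :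
    binf ∈ B (T rinf) ∧ -(ContinuousLinearMap.adjoint T) binf ∈ A rinf := by
  have hr' : WeakTendsto r rinf := hr
  have hb' : WeakTendsto b binf := hbw
  have has : WeakTendsto a (-T.adjoint binf) :=
    (hb'.map T.adjoint).neg.congr_of_norm_sub (by simpa [norm_sub_rev, add_comm] using hsum)
  have hs : WeakTendsto s (T rinf) := (hr'.map T).congr_of_norm_sub hGr
  obtain ⟨Mr, hMr⟩ := hr'.exists_norm_le
  obtain ⟨Mb, hMb⟩ := hb'.exists_norm_le
  have hcross : Tendsto (fun k => ⟪a k, r k⟫ + ⟪b k, s k⟫) atTop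
      (𝓝 (⟪-T.adjoint binf, rinf⟫ + ⟪binf, T rinf⟫)) := by
    have hlim := (tendsto_inner_zero_of_norm_le hMr hsum).sub
      (tendsto_inner_zero_of_norm_le hMb hGr)
    convert hlim using 1
    · ext k
      rw [inner_add_right, inner_sub_right, ContinuousLinearMap.adjoint_inner_right,
        real_inner_comm (r k), real_inner_comm (T (r k))]
      ring
    · simp [ContinuousLinearMap.adjoint_inner_left]
  refine (hA.mem_and_mem_of_inner_add_nonneg hB fun x u y v hu hv => ?_).symm
  have hlim : Tendsto (fun k => ⟪a k - u, r k - x⟫ + ⟪b k - v, s k - y⟫) atTop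
      (𝓝 (⟪-T.adjoint binf - u, rinf - x⟫ + ⟪binf - v, T rinf - y⟫)) := by
    convert ((hr'.tendsto_inner_sub_sub_sub_inner has x u).add
      (hs.tendsto_inner_sub_sub_sub_inner hb' y v)).add hcross using 2 <;> ring
  exact ge_of_tendsto' hlim fun k => add_nonneg (hA.1 _ _ _ _ (ha k) hu) (hB.1 _ _ _ _ (hb k) hv)
end

section
/- Let σ ∈ [0,1), ρ > 0, and suppose x, y, ẑ, ŵ, e in a real Hilbert space satisfy x + ρy = ẑ + ρŵ + e and ‖e‖² ≤ σ²(‖ẑ − x‖² + ρ²‖ŵ − y‖²). Then ⟨ẑ − x, y − ŵ⟩ ≥ ((1−σ²)/2)(ρ⁻¹‖ẑ − x‖² + ρ‖ŵ − y‖²) ≥ 0. -/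
open RealInnerProductSpace

theorem stmt17 {H : Type*} [NormedAddCommGroup H] [InnerProductSpace ℝ H] [CompleteSpace H]
    (σ ρ : ℝ) (hσ : σ ∈ Set.Ico (0 : ℝ) 1) (hρ : 0 < ρ)
    (x y zhat what e : H)
    (heq : x + ρ • y = zhat + ρ • what + e)
    (herr : ‖e‖ ^ 2 ≤ σ ^ 2 * (‖zhat - x‖ ^ 2 + ρ ^ 2 * ‖what - y‖ ^ 2)) :
    ((1 - σ ^ 2) / 2) * (ρ⁻¹ * ‖zhat - x‖ ^ 2 + ρ * ‖what - y‖ ^ 2) ≤ ⟪zhat - x, y - what⟫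
    ∧ 0 ≤ ((1 - σ ^ 2) / 2) * (ρ⁻¹ * ‖zhat - x‖ ^ 2 + ρ * ‖what - y‖ ^ 2) := by
  obtain ⟨hσ0, hσ1⟩ := hσ
  set u := zhat - x
  set v := what - y
  have he : e = -(u + ρ • v) := by
    have h0 : e = x + ρ • y - (zhat + ρ • what) := by rw [heq]; abel
    rw [h0]; simp only [u, v, smul_sub]; abel
  have hnorm : ‖e‖ ^ 2 = ‖u‖ ^ 2 + 2 * (ρ * ⟪u, v⟫) + ρ ^ 2 * ‖v‖ ^ 2 := by
    rw [he, norm_neg, norm_add_sq_real, real_inner_smul_right, norm_smul,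
      Real.norm_eq_abs, abs_of_pos hρ, mul_pow]
  have hiv : ⟪u, y - what⟫ = -⟪u, v⟫ := by
    have : y - what = -v := by simp [v]
    rw [this, inner_neg_right]
  rw [hiv]
  have hu : 0 ≤ ‖u‖ ^ 2 := sq_nonneg _
  have hv : 0 ≤ ‖v‖ ^ 2 := sq_nonneg _
  have hσ2 : σ ^ 2 ≤ 1 := by nlinarith
  constructor
  · have hkey : (1 - σ ^ 2) * (‖u‖ ^ 2 + ρ ^ 2 * ‖v‖ ^ 2) ≤ -(2 * ρ * ⟪u, v⟫) := by
      nlinarith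
    have h1 := mul_le_mul_of_nonneg_left hkey (inv_pos.mpr hρ).le
    have h2 : ρ⁻¹ * ((1 - σ ^ 2) * (‖u‖ ^ 2 + ρ ^ 2 * ‖v‖ ^ 2))
        = (1 - σ ^ 2) * (ρ⁻¹ * ‖u‖ ^ 2 + ρ * ‖v‖ ^ 2) := by
      have hh : ρ⁻¹ * ρ ^ 2 = ρ := by
        rw [sq, ← mul_assoc, inv_mul_cancel₀ hρ.ne', one_mul]
      linear_combination (1 - σ ^ 2) * ‖v‖ ^ 2 * hh
    have h3 : ρ⁻¹ * -(2 * ρ * ⟪u, v⟫) = -(2 * ⟪u, v⟫) := by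
      have hh : ρ⁻¹ * ρ = 1 := inv_mul_cancel₀ hρ.ne'
      linear_combination (-2 * ⟪u, v⟫) * hh
    rw [h2, h3] at h1
    linarith
  · have : 0 ≤ ρ⁻¹ * ‖u‖ ^ 2 + ρ * ‖v‖ ^ 2 := by positivity
    nlinarith
end

section
/- Let {p^k} be a sequence in a real Hilbert space generated by p̂^k = p^k + α_k(p^k − p^{k−1}) and p^{k+1} = p̂^k − (β_k max{0, φ_k(p̂^k)}/‖∇φ_k‖²)∇φ_k, where each φ_k is affine with ∇φ_k ≠ 0 and φ_k ≤ 0 on a nonempty closed convex set S, 0 ≤ α_k ≤ α < 1, 0 < β_lower ≤ β_k ≤ β_upper < 2, and p⁰ = p^{−1}. If ∑_{k=0}^∞ α_k‖p^k − p^{k−1}‖² < ∞, then max{0, φ_k(p̂^k)}/‖∇φ_k‖ → 0 as k → ∞. -/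
/-!
Fix `q ∈ S` and put `u k = ‖p k - q‖²`, `d k = max 0 (φ k (p̂ k)) / ‖g k‖`. Since `q` lies in the
halfspace `{φ k ≤ 0}`, the relaxed projection step gives
`u (k+1) ≤ ‖p̂ k - q‖² - β k (2 - β k) d k²`, and expanding the inertial extrapolation gives
`‖p̂ k - q‖² ≤ u k + α k (u k - u (k-1)) + 2 α k ‖p k - p (k-1)‖²`. The positive parts `θ k` of
`u k - u (k-1)` then satisfy `θ (k+1) ≤ a θ k + δ k` with `δ` summable, so `θ` is summable, and
telescoping the descent inequality shows that `∑ d k²` is finite.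
-/

open Filter RealInnerProductSpace Finset

theorem summable_of_le_mul_add {x δ : ℕ → ℝ} {a : ℝ} (hx : ∀ k, 0 ≤ x k) (ha : a < 1)
    (hδ : Summable δ) (hδ0 : ∀ k, 0 ≤ δ k) (h : ∀ k, x (k + 1) ≤ a * x k + δ k) :
    Summable x := by
  refine summable_of_sum_range_le hx (c := (x 0 + ∑' k, δ k) / (1 - a)) fun n => ?_
  have hsucc : ∑ k ∈ range (n + 1), x k ≤ x 0 + a * ∑ k ∈ range n, x k + ∑' k, δ k :=
    calc ∑ k ∈ range (n + 1), x k = x 0 + ∑ k ∈ range n, x (k + 1) := by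
          rw [sum_range_succ', add_comm]
      _ ≤ x 0 + ∑ k ∈ range n, (a * x k + δ k) := by gcongr with k; exact h k
      _ = x 0 + a * ∑ k ∈ range n, x k + ∑ k ∈ range n, δ k := by
          rw [sum_add_distrib, mul_sum, add_assoc]
      _ ≤ x 0 + a * ∑ k ∈ range n, x k + ∑' k, δ k := by
          gcongr; exact hδ.sum_le_tsum _ fun k _ => hδ0 k
  have hmono : ∑ k ∈ range n, x k ≤ ∑ k ∈ range (n + 1), x k := by
    rw [sum_range_succ]; linarith [hx n]
  rw [le_div_iff₀ (sub_pos.2 ha)]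
  nlinarith

theorem summable_of_le_sub_succ_add {u s r : ℕ → ℝ} (hu : ∀ k, 0 ≤ u k) (hs : ∀ k, 0 ≤ s k)
    (hr : Summable r) (hr0 : ∀ k, 0 ≤ r k) (h : ∀ k, s k ≤ u k - u (k + 1) + r k) :
    Summable s := by
  refine summable_of_sum_range_le hs (c := u 0 + ∑' k, r k) fun n => ?_
  calc ∑ k ∈ range n, s k ≤ ∑ k ∈ range n, (u k - u (k + 1) + r k) := sum_le_sum fun k _ => h k
    _ = u 0 - u n + ∑ k ∈ range n, r k := by rw [sum_add_distrib, sum_range_sub']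
    _ ≤ u 0 + ∑' k, r k := by linarith [hu n, hr.sum_le_tsum (range n) fun k _ => hr0 k]

theorem summable_of_inertial_descent {u s α δ : ℕ → ℝ} {a : ℝ}
    (hu : ∀ k, 0 ≤ u k) (hs : ∀ k, 0 ≤ s k) (hα : ∀ k, 0 ≤ α k ∧ α k ≤ a) (ha : a < 1)
    (hδ : Summable δ) (hδ0 : ∀ k, 0 ≤ δ k)
    (h : ∀ k, u (k + 1) + s k ≤ u k + α k * (u k - u (k - 1)) + δ k) : Summable s := by
  set θ : ℕ → ℝ := fun k => max 0 (u k - u (k - 1))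
  have hθ0 : ∀ k, 0 ≤ θ k := fun k => le_max_left _ _
  have ha0 : 0 ≤ a := (hα 0).1.trans (hα 0).2
  have hθα : ∀ k, α k * (u k - u (k - 1)) ≤ a * θ k := fun k =>
    calc α k * (u k - u (k - 1)) ≤ α k * θ k :=
          mul_le_mul_of_nonneg_left (le_max_right _ _) (hα k).1
      _ ≤ a * θ k := mul_le_mul_of_nonneg_right (hα k).2 (hθ0 k)
  have hr0 : ∀ k, 0 ≤ a * θ k + δ k := fun k => add_nonneg (mul_nonneg ha0 (hθ0 k)) (hδ0 k)
  have hθ : Summable θ := by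
    refine summable_of_le_mul_add hθ0 ha hδ hδ0 fun k => max_le (hr0 k) ?_
    simp only [Nat.add_sub_cancel]
    linarith [h k, hs k, hθα k]
  exact summable_of_le_sub_succ_add hu hs ((hθ.mul_left a).add hδ) hr0 fun k => by
    linarith [h k, hθα k]

theorem tendsto_zero_of_summable_sq {d : ℕ → ℝ} (h : Summable fun k => d k ^ 2) :
    Tendsto d atTop (nhds 0) := by
  rw [tendsto_zero_iff_abs_tendsto_zero]
  simpa [Real.sqrt_sq_eq_abs, Function.comp_def] using h.tendsto_atTop_zero.sqrt

section InnerProductSpace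

variable {H : Type*} [NormedAddCommGroup H] [InnerProductSpace ℝ H]

theorem norm_add_smul_sub_sub_sq (x y q : H) (α : ℝ) :
    ‖x + α • (x - y) - q‖ ^ 2
      = ‖x - q‖ ^ 2 + α * (‖x - q‖ ^ 2 - ‖y - q‖ ^ 2) + α * (1 + α) * ‖x - y‖ ^ 2 := by
  have h1 : x + α • (x - y) - q = (x - q) + α • (x - y) := by abel
  have h2 : y - q = (x - q) - (x - y) := by abel
  rw [h1, h2]
  generalize x - q = v, x - y = w
  rw [norm_add_sq_real, norm_sub_sq_real, inner_smul_right, norm_smul, mul_pow,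
    Real.norm_eq_abs, sq_abs]
  ring

theorem relaxed_halfspace_projection_norm_sub_sq_le {g x q : H} {c β : ℝ} (hq : ⟪g, q⟫ + c ≤ 0)
    (hβ : 0 ≤ β) :
    ‖x - (β * max 0 (⟪g, x⟫ + c) / ‖g‖ ^ 2) • g - q‖ ^ 2
      ≤ ‖x - q‖ ^ 2 - β * (2 - β) * (max 0 (⟪g, x⟫ + c) / ‖g‖) ^ 2 := by
  rcases eq_or_ne g 0 with rfl | hg
  · simp
  set M := max 0 (⟪g, x⟫ + c)
  have hM : M * M ≤ M * ⟪g, x - q⟫ := by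
    rcases le_total (⟪g, x⟫ + c) 0 with hx | hx
    · simp [M, max_eq_left hx]
    · simp only [M, max_eq_right hx, inner_sub_right]; nlinarith
  have hg2 : 0 < ‖g‖ ^ 2 := by positivity
  have hx : x - (β * M / ‖g‖ ^ 2) • g - q = (x - q) - (β * M / ‖g‖ ^ 2) • g := by abel
  calc ‖x - (β * M / ‖g‖ ^ 2) • g - q‖ ^ 2
      = ‖x - q‖ ^ 2 - β * (2 - β) * (M / ‖g‖) ^ 2
          - 2 * β / ‖g‖ ^ 2 * (M * ⟪g, x - q⟫ - M * M) := by
        rw [hx, norm_sub_sq_real, inner_smul_right, real_inner_comm, norm_smul, mul_pow,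
          Real.norm_eq_abs, sq_abs]
        field_simp
        ring
    _ ≤ ‖x - q‖ ^ 2 - β * (2 - β) * (M / ‖g‖) ^ 2 := by
        have : 0 ≤ 2 * β / ‖g‖ ^ 2 * (M * ⟪g, x - q⟫ - M * M) :=
          mul_nonneg (by positivity) (by linarith)
        linarith

end InnerProductSpace

theorem stmt19_general {H : Type*} [NormedAddCommGroup H] [InnerProductSpace ℝ H]
    (S : Set H) (hSne : S.Nonempty)
    (g : ℕ → H) (c : ℕ → ℝ)
    (φ : ℕ → H → ℝ) (hφ : ∀ k z, φ k z = ⟪g k, z⟫ + c k)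
    (hneg : ∀ k, ∀ q ∈ S, φ k q ≤ 0)
    (α β : ℕ → ℝ) (a blo bup : ℝ)
    (hα : ∀ k, 0 ≤ α k ∧ α k ≤ a) (ha : a < 1)
    (hβ : ∀ k, blo ≤ β k ∧ β k ≤ bup) (hblo : 0 < blo) (hbup : bup < 2)
    (p phat : ℕ → H)
    (hphat : ∀ k, phat k = p k + α k • (p k - p (k - 1)))
    (hstep : ∀ k, p (k + 1)
      = phat k - (β k * max 0 (φ k (phat k)) / ‖g k‖ ^ 2) • g k)
    (hsum : Summable (fun k => α k * ‖p k - p (k - 1)‖ ^ 2)) :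
    Tendsto (fun k => max 0 (φ k (phat k)) / ‖g k‖) atTop (nhds 0) := by
  obtain ⟨q, hq⟩ := hSne
  obtain rfl : φ = fun k z => ⟪g k, z⟫ + c k := funext fun k => funext (hφ k)
  set d : ℕ → ℝ := fun k => max 0 (⟪g k, phat k⟫ + c k) / ‖g k‖
  set C := blo * (2 - bup)
  have hC : 0 < C := mul_pos hblo (by linarith)
  have hβC : ∀ k, C ≤ β k * (2 - β k) := fun k =>
    mul_le_mul (hβ k).1 (by linarith [(hβ k).2]) (by linarith) (by linarith [(hβ k).1])
  have hdescent : ∀ k, ‖p (k + 1) - q‖ ^ 2 + C * d k ^ 2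
      ≤ ‖p k - q‖ ^ 2 + α k * (‖p k - q‖ ^ 2 - ‖p (k - 1) - q‖ ^ 2)
        + 2 * (α k * ‖p k - p (k - 1)‖ ^ 2) := by
    intro k
    have hproj := relaxed_halfspace_projection_norm_sub_sq_le (x := phat k) (hneg k q hq)
      (by linarith [(hβ k).1] : 0 ≤ β k)
    have hinertia := norm_add_smul_sub_sub_sq (p k) (p (k - 1)) q (α k)
    rw [← hstep k] at hproj
    rw [← hphat k] at hinertia
    have hα2 : α k * (1 + α k) ≤ 2 * α k := by nlinarith [hα k]
    nlinarith [mul_le_mul_of_nonneg_right (hβC k) (sq_nonneg (d k)),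
      mul_le_mul_of_nonneg_right hα2 (sq_nonneg ‖p k - p (k - 1)‖)]
  have hCd : Summable fun k => C * d k ^ 2 :=
    summable_of_inertial_descent (u := fun k => ‖p k - q‖ ^ 2) (fun _ => sq_nonneg _) (fun _ => by positivity) hα ha
      (hsum.mul_left 2) (fun k => mul_nonneg zero_le_two (mul_nonneg (hα k).1 (sq_nonneg _)))
      hdescent
  exact tendsto_zero_of_summable_sq ((summable_mul_left_iff hC.ne').1 hCd)

/-- Inertial-relaxed linear separator-projection method. `p (k-1)` uses truncated
subtraction, so at `k = 0` it equals `p 0`, encoding `p⁰ = p^{-1}`. -/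
theorem stmt19 {H : Type*} [NormedAddCommGroup H] [InnerProductSpace ℝ H] [CompleteSpace H]
    (S : Set H) (hSne : S.Nonempty) (hScl : IsClosed S) (hScv : Convex ℝ S)
    (g : ℕ → H) (hg : ∀ k, g k ≠ 0) (c : ℕ → ℝ)
    (φ : ℕ → H → ℝ) (hφ : ∀ k z, φ k z = ⟪g k, z⟫ + c k)
    (hneg : ∀ k, ∀ q ∈ S, φ k q ≤ 0)
    (α β : ℕ → ℝ) (a blo bup : ℝ)
    (hα : ∀ k, 0 ≤ α k ∧ α k ≤ a) (ha : a < 1)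
    (hβ : ∀ k, blo ≤ β k ∧ β k ≤ bup) (hblo : 0 < blo) (hbup : bup < 2)
    (p phat : ℕ → H)
    (hphat : ∀ k, phat k = p k + α k • (p k - p (k - 1)))
    (hstep : ∀ k, p (k + 1)
      = phat k - (β k * max 0 (φ k (phat k)) / ‖g k‖ ^ 2) • g k)
    (hsum : Summable (fun k => α k * ‖p k - p (k - 1)‖ ^ 2)) :
    Tendsto (fun k => max 0 (φ k (phat k)) / ‖g k‖) atTop (nhds 0) :=
  stmt19_general S hSne g c φ hφ hneg α β a blo bup hα ha hβ hblo hbup p phat hphat hstep hsum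
end
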